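/- arXiv:2303.04733 — 2 statements merged into one kernel-verified Lean document; each statement's English description precedes it below -/
import Mathlib

section
/- Let D be an alternating dimap with clockwise face cycles C_1, ..., C_k, and for a root vertex r define M_{D,r}(x_1,...,x_k) = Σ_A ∏_{i=1}^k x_i^{a_i(A)}, where the sum runs over spanning arborescences A of D rooted at r and a_i(A) is the number of edges of A in C_i. Then the support of M_{D,r} is independent of the choice of r, and it equals the set of tuples (a_1(T),...,a_k(T)) as T ranges over all spanning trees of the underlying undirected graph of D. -/
/-- A finite directed multigraph given by source and target maps. -/
structure DigraphStr (V E : Type) where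
  src : E → V
  tgt : E → V

namespace DigraphStr

variable {V E : Type} (D : DigraphStr V E)

/-- Directed paths (lists of edges) inside an edge set `T`. -/
inductive DPath (T : Set E) : V → V → List E → Prop
  | nil (v : V) : DPath T v v []
  | cons {u w : V} {e : E} {p : List E} (he : e ∈ T) (hu : D.src e = u)
      (hp : DPath T (D.tgt e) w p) : DPath T u w (e :: p)

/-- Undirected walks (lists of edges, traversed forwards or backwards) inside `T`. -/
inductive UWalk (T : Set E) : V → V → List E → Prop
  | nil (v : V) : UWalk T v v []
  | consF {u w : V} {e : E} {p : List E} (he : e ∈ T) (hu : D.src e = u)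
      (hp : UWalk T (D.tgt e) w p) : UWalk T u w (e :: p)
  | consB {u w : V} {e : E} {p : List E} (he : e ∈ T) (hu : D.tgt e = u)
      (hp : UWalk T (D.src e) w p) : UWalk T u w (e :: p)

/-- `T` is a spanning arborescence rooted at `r`: there is a unique directed
path in `T` from `r` to every vertex. -/
def IsArborescence (T : Set E) (r : V) : Prop :=
  ∀ v : V, ∃! p : List E, D.DPath T r v p

/-- The edge set `T` connects all vertices (in the underlying undirected graph). -/
def Conn (T : Set E) : Prop := ∀ u v : V, ∃ p : List E, D.UWalk T u v p

/-- `T` is a spanning tree of the underlying undirected graph. -/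
def IsSpanningTree [Fintype V] (T : Finset E) : Prop :=
  D.Conn ↑T ∧ T.card + 1 = Fintype.card V

/-- A (nonempty, edge-distinct) directed cycle, given by its list of edges in order. -/
def IsDirCycle (c : List E) : Prop :=
  c ≠ [] ∧ c.Nodup ∧
    ∀ i : Fin c.length,
      D.tgt (c.get i) = D.src (c.get ⟨((i : ℕ) + 1) % c.length, Nat.mod_lt _ i.pos⟩)

end DigraphStr

/-- A planar alternating dimap, encoded as an oriented combinatorial map: the
clockwise faces are directed cycles `cw 1, …, cw k` and the counterclockwise
faces are directed cycles `ccw 1, …, ccw m`; every edge lies on exactly one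
cycle of each family, the underlying graph is connected, and Euler's formula
`|V| - |E| + (k + m) = 2` holds (genus zero, i.e. planarity). -/
structure AltDimap (V E : Type) [Fintype V] [Fintype E] (k : ℕ) extends DigraphStr V E where
  m : ℕ
  cw : Fin k → List E
  ccw : Fin m → List E
  cw_cycle : ∀ i, toDigraphStr.IsDirCycle (cw i)
  ccw_cycle : ∀ j, toDigraphStr.IsDirCycle (ccw j)
  cw_partition : ∀ e : E, ∃! i : Fin k, e ∈ cw i
  ccw_partition : ∀ e : E, ∃! j : Fin m, e ∈ ccw j
  conn : toDigraphStr.Conn Set.univ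
  euler : Fintype.card V + (k + m) = Fintype.card E + 2

open MvPolynomial in
open scoped Classical in
/-- The M-polynomial of an alternating dimap with root `r`: the generating
polynomial, over spanning arborescences `A` rooted at `r`, of the numbers of
edges of `A` on each clockwise face cycle. -/
noncomputable def Mpoly {V E : Type} [Fintype V] [Fintype E] [DecidableEq E] {k : ℕ}
    (D : AltDimap V E k) (r : V) : MvPolynomial (Fin k) ℝ :=
  ∑ A ∈ Finset.univ.filter (fun A : Finset E => D.toDigraphStr.IsArborescence ↑A r),
    ∏ i : Fin k, (MvPolynomial.X i : MvPolynomial (Fin k) ℝ) ^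
      (A.filter (fun e => e ∈ D.cw i)).card

/-!
Every arborescence is a spanning tree, which gives one inclusion. Conversely, let `T` be a
spanning tree in which some vertex is not reachable from `r` by a directed path. Walking in `T`
from `r` to such a vertex, one crosses an edge `e` whose head is reachable and whose tail is not.
Deleting `e` splits `T` into two components, and the clockwise face cycle through `e` enters the
component of `r` along `e`, so it leaves it along some edge `f`; then `T - e + f` is a spanning
tree with the same face statistics, since `e` and `f` lie on the same face. Directed paths from `r`
never use `e`, so no vertex stops being reachable, and if none becomes reachable, the head of `f`
is unreachable. Hence the pair (unreachable vertices, tree edges entering reachable vertices)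
drops lexicographically, and iterating ends in an `r`-arborescence with the statistics of `T`.
-/

theorem Finset.card_filter_insert_erase {α : Type*} [DecidableEq α] {s : Finset α} {a b : α}
    {p : α → Prop} [DecidablePred p] (ha : a ∈ s) (hb : b ∉ s) (hab : p a ↔ p b) :
    ((insert b (s.erase a)).filter p).card = (s.filter p).card := by
  rw [Finset.filter_insert, Finset.filter_erase]
  by_cases hp : p b
  · rw [if_pos hp, Finset.card_insert_of_notMem (by simp [hb]),
      Finset.card_erase_add_one (Finset.mem_filter.2 ⟨ha, hab.2 hp⟩)]
  · rw [if_neg hp, Finset.erase_eq_of_notMem (by simp [hab, hp])]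

theorem MvPolynomial.mem_support_sum_monomial_one {R σ ι : Type*} [CommSemiring R] [CharZero R]
    (s : Finset ι) (m : ι → σ →₀ ℕ) (α : σ →₀ ℕ) :
    α ∈ (∑ i ∈ s, monomial (m i) (1 : R)).support ↔ ∃ i ∈ s, m i = α := by
  classical
  rw [mem_support_iff, coeff_sum]
  simp [coeff_monomial, Finset.sum_boole]

namespace SimpleGraph

variable {V : Type} {G H : SimpleGraph V} {a b c d u v : V}

theorem Reachable.of_adj_closed {P : V → Prop} (hP : ∀ ⦃x y⦄, G.Adj x y → P x → P y)
    (h : G.Reachable u v) (hu : P u) : P v := by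
  obtain ⟨w⟩ := h
  induction w with
  | nil => exact hu
  | cons hxy _ ih => exact ih (hP hxy hu)

theorem reachable_or_reachable_of_sup_edge (h : (H ⊔ edge a b).Reachable a v) :
    H.Reachable a v ∨ H.Reachable b v := by
  refine h.of_adj_closed (P := fun v => H.Reachable a v ∨ H.Reachable b v)
    (fun x y hxy hx => ?_) (.inl .rfl)
  rcases hxy with hxy | hxy
  · exact hx.imp (·.trans hxy.reachable) (·.trans hxy.reachable)
  · obtain ⟨⟨rfl, rfl⟩ | ⟨rfl, rfl⟩, -⟩ := (edge_adj _ _ _ _).1 hxy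
    · exact .inr .rfl
    · exact .inl .rfl

theorem Preconnected.of_sup_edge (h : (H ⊔ edge a b).Preconnected) (hab : H.Reachable a b) :
    H.Preconnected := by
  have hfrom : ∀ v, H.Reachable a v := fun v =>
    (reachable_or_reachable_of_sup_edge (h a v)).elim id hab.trans
  exact fun u v => (hfrom u).symm.trans (hfrom v)

theorem Preconnected.sup_edge_exchange (h : (H ⊔ edge a b).Preconnected) (hbc : H.Reachable b c)
    (hbd : ¬ H.Reachable b d) : (H ⊔ edge c d).Preconnected := by
  have hmono : ∀ {x y}, H.Reachable x y → (H ⊔ edge c d).Reachable x y :=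
    fun hxy => hxy.mono le_sup_left
  have had : H.Reachable a d := (reachable_or_reachable_of_sup_edge (h a d)).resolve_right hbd
  have hcd : (H ⊔ edge c d).Reachable c d := by
    by_cases hne : c = d
    · exact hne ▸ .rfl
    · exact Adj.reachable (.inr ((edge_adj _ _ _ _).2 ⟨.inl ⟨rfl, rfl⟩, hne⟩))
  have hba : (H ⊔ edge c d).Reachable b a := (hmono hbc).trans (hcd.trans (hmono had.symm))
  have hfrom : ∀ v, (H ⊔ edge c d).Reachable b v := fun v =>
    (reachable_or_reachable_of_sup_edge (h a v)).elim (hba.trans <| hmono ·) (hmono ·)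
  exact fun u v => (hfrom u).symm.trans (hfrom v)

end SimpleGraph

namespace DigraphStr

variable {V E : Type} {D : DigraphStr V E} {T T' : Set E} {r u v : V} {e f g : E}

def Reachable (D : DigraphStr V E) (T : Set E) (u v : V) : Prop := ∃ p, D.DPath T u v p

theorem dPath_append_singleton_iff {p : List E} :
    D.DPath T u v (p ++ [g]) ↔ g ∈ T ∧ D.tgt g = v ∧ D.DPath T u (D.src g) p := by
  induction p generalizing u with
  | nil =>
    rw [List.nil_append]
    constructor
    · rintro (_ | ⟨hg, rfl, ⟨⟩⟩)
      exact ⟨hg, rfl, .nil _⟩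
    · rintro ⟨hg, rfl, ⟨⟩⟩
      exact .cons hg rfl (.nil _)
  | cons x p ih =>
    constructor
    · rintro (_ | ⟨hx, rfl, hp⟩)
      obtain ⟨hg, hv, hp⟩ := ih.1 hp
      exact ⟨hg, hv, .cons hx rfl hp⟩
    · rintro ⟨hg, hv, _ | ⟨hx, rfl, hp⟩⟩
      exact .cons hx rfl (ih.2 ⟨hg, hv, hp⟩)

theorem Reachable.refl : D.Reachable T v v := ⟨[], .nil v⟩

theorem Reachable.step (h : D.Reachable T u (D.src g)) (hg : g ∈ T) :
    D.Reachable T u (D.tgt g) :=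
  let ⟨p, hp⟩ := h
  ⟨p ++ [g], dPath_append_singleton_iff.2 ⟨hg, rfl, hp⟩⟩

theorem Reachable.exists_last (h : D.Reachable T u v) (hne : u ≠ v) :
    ∃ g ∈ T, D.tgt g = v ∧ D.Reachable T u (D.src g) := by
  obtain ⟨p, hp⟩ := h
  rcases p.eq_nil_or_concat with rfl | ⟨q, g, rfl⟩
  · cases hp; exact absurd rfl hne
  · obtain ⟨hg, hv, hq⟩ := dPath_append_singleton_iff.1 (List.concat_eq_append ▸ hp)
    exact ⟨g, hg, hv, q, hq⟩

theorem Reachable.induction {P : V → Prop} (hr : P r)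
    (hstep : ∀ g ∈ T, D.Reachable T r (D.src g) → P (D.src g) → P (D.tgt g))
    (h : D.Reachable T r v) : P v := by
  have key : ∀ {u w p}, D.DPath T u w p → D.Reachable T r u → P u → P w := by
    intro u w p hp
    induction hp with
    | nil => exact fun _ hu => hu
    | cons hg hu _ ih =>
      subst hu
      exact fun hr' hP => ih (hr'.step hg) (hstep _ hg hr' hP)
  obtain ⟨p, hp⟩ := h
  exact key hp .refl hr

theorem Reachable.mono_of_forall (hT : ∀ g ∈ T, D.Reachable T r (D.src g) → g ∈ T')
    (h : D.Reachable T r v) : D.Reachable T' r v :=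
  h.induction .refl fun g hg hrg hrg' => hrg'.step (hT g hg hrg)

theorem dPath_eq_of_injOn (hr : ∀ g ∈ T, D.tgt g ≠ r) (hinj : Set.InjOn D.tgt T)
    {p q : List E} (hp : D.DPath T r v p) (hq : D.DPath T r v q) : p = q := by
  induction p using List.reverseRecOn generalizing v q with
  | nil =>
    cases hp
    rcases q.eq_nil_or_concat with rfl | ⟨q, g', rfl⟩
    · rfl
    · obtain ⟨hg', hv, -⟩ := dPath_append_singleton_iff.1 (List.concat_eq_append ▸ hq)
      exact absurd hv (hr g' hg')
  | append_singleton p g ih =>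
    obtain ⟨hg, hv, hp⟩ := dPath_append_singleton_iff.1 hp
    rcases q.eq_nil_or_concat with rfl | ⟨q, g', rfl⟩
    · cases hq; exact absurd hv (hr g hg)
    · obtain ⟨hg', hv', hq⟩ := dPath_append_singleton_iff.1 (List.concat_eq_append ▸ hq)
      obtain rfl := hinj hg' hg (hv'.trans hv.symm)
      rw [ih hp hq, List.concat_eq_append]

theorem isArborescence_iff : D.IsArborescence T r ↔
    (∀ v, D.Reachable T r v) ∧ (∀ g ∈ T, D.tgt g ≠ r) ∧ Set.InjOn D.tgt T := by
  constructor
  · intro h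
    have hreach : ∀ v, D.Reachable T r v := fun v => (h v).exists
    have hlast : ∀ g ∈ T, ∃ p, D.DPath T r (D.tgt g) (p ++ [g]) := fun g hg =>
      (hreach (D.src g)).imp fun _ hp => dPath_append_singleton_iff.2 ⟨hg, rfl, hp⟩
    refine ⟨hreach, fun g hg hgr => ?_, fun g hg g' hg' hgg' => ?_⟩
    · obtain ⟨p, hp⟩ := hlast g hg
      have hnil : D.DPath T r r (p ++ [g]) := hgr ▸ hp
      simpa using (h r).unique hnil (.nil r)
    · obtain ⟨p, hp⟩ := hlast g hg
      obtain ⟨p', hp'⟩ := hlast g' hg'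
      have hp'' : D.DPath T r (D.tgt g) (p' ++ [g']) := hgg' ▸ hp'
      simpa using (List.append_inj' ((h _).unique hp hp'') rfl).2
  · rintro ⟨hreach, hr, hinj⟩ v
    obtain ⟨p, hp⟩ := hreach v
    exact ⟨p, hp, fun q hq => dPath_eq_of_injOn hr hinj hq hp⟩

theorem card_add_one_eq_iff_of_reachable [Fintype V] {T : Finset E}
    (hreach : ∀ v, D.Reachable T r v) :
    T.card + 1 = Fintype.card V ↔ (∀ g ∈ T, D.tgt g ≠ r) ∧ Set.InjOn D.tgt T := by
  classical
  have hsub : Finset.univ.erase r ⊆ T.image D.tgt := fun v hv => by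
    obtain ⟨g, hg, hgv, -⟩ := (hreach v).exists_last (Finset.ne_of_mem_erase hv).symm
    exact Finset.mem_image.2 ⟨g, hg, hgv⟩
  have hcard : (Finset.univ.erase r).card + 1 = Fintype.card V := by
    rw [Finset.card_erase_of_mem (Finset.mem_univ r), Finset.card_univ,
      Nat.sub_add_cancel (Fintype.card_pos_iff.2 ⟨r⟩)]
  constructor
  · intro hT
    have heq := Finset.eq_of_subset_of_card_le hsub (Finset.card_image_le.trans (by omega))
    refine ⟨fun g hg => ?_, Finset.card_image_iff.1 ?_⟩
    · exact Finset.ne_of_mem_erase (heq ▸ Finset.mem_image_of_mem D.tgt hg)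
    · exact le_antisymm Finset.card_image_le (by rw [← heq]; omega)
  · rintro ⟨hr, hinj⟩
    have heq : Finset.univ.erase r = T.image D.tgt := hsub.antisymm fun v hv => by
      obtain ⟨g, hg, rfl⟩ := Finset.mem_image.1 hv
      exact Finset.mem_erase.2 ⟨hr g hg, Finset.mem_univ _⟩
    rw [← Finset.card_image_of_injOn hinj, ← heq, hcard]

/-- Loops are dropped; parallel and antiparallel edges are merged. -/
def toSimpleGraph (D : DigraphStr V E) (T : Set E) : SimpleGraph V :=
  SimpleGraph.fromEdgeSet ((fun g => s(D.src g, D.tgt g)) '' T)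

theorem reachable_src_tgt (hg : g ∈ T) : (D.toSimpleGraph T).Reachable (D.src g) (D.tgt g) := by
  by_cases hne : D.src g = D.tgt g
  · exact hne ▸ .rfl
  · exact SimpleGraph.Adj.reachable ((SimpleGraph.fromEdgeSet_adj _).2 ⟨⟨g, hg, rfl⟩, hne⟩)

theorem toSimpleGraph_reachable_iff :
    (D.toSimpleGraph T).Reachable u v ↔ ∃ p, D.UWalk T u v p := by
  constructor
  · rw [SimpleGraph.reachable_iff_reflTransGen]
    intro h
    induction h using Relation.ReflTransGen.head_induction_on with
    | refl => exact ⟨[], .nil _⟩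
    | head hadj _ ih =>
      obtain ⟨p, hp⟩ := ih
      obtain ⟨⟨g, hg, hguv⟩, -⟩ := (SimpleGraph.fromEdgeSet_adj _).1 hadj
      rcases Sym2.eq_iff.1 hguv with ⟨hs, ht⟩ | ⟨hs, ht⟩
      · exact ⟨g :: p, .consF hg hs (ht ▸ hp)⟩
      · exact ⟨g :: p, .consB hg ht (hs ▸ hp)⟩
  · rintro ⟨p, hp⟩
    induction hp with
    | nil => exact .rfl
    | consF hg hu _ ih => exact hu ▸ (reachable_src_tgt hg).trans ih
    | consB hg hu _ ih => exact hu ▸ (reachable_src_tgt hg).symm.trans ih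

theorem conn_iff_preconnected : D.Conn T ↔ (D.toSimpleGraph T).Preconnected :=
  forall₂_congr fun _ _ => toSimpleGraph_reachable_iff.symm

theorem toSimpleGraph_insert :
    D.toSimpleGraph (insert g T) = D.toSimpleGraph T ⊔ SimpleGraph.edge (D.src g) (D.tgt g) := by
  rw [toSimpleGraph, Set.image_insert_eq, Set.insert_eq, SimpleGraph.fromEdgeSet_union, sup_comm]
  rfl

theorem toSimpleGraph_reachable_of_closed {P : V → Prop}
    (hP : ∀ g ∈ T, P (D.src g) ↔ P (D.tgt g)) (h : (D.toSimpleGraph T).Reachable u v)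
    (hu : P u) : P v := by
  refine h.of_adj_closed (fun x y hxy hx => ?_) hu
  obtain ⟨⟨g, hg, hgxy⟩, -⟩ := (SimpleGraph.fromEdgeSet_adj _).1 hxy
  rcases Sym2.eq_iff.1 hgxy with ⟨rfl, rfl⟩ | ⟨rfl, rfl⟩
  · exact (hP g hg).1 hx
  · exact (hP g hg).2 hx

theorem card_le_card_add_one_of_preconnected [Fintype V] {S : Finset E}
    (h : (D.toSimpleGraph S).Preconnected) : Fintype.card V ≤ S.card + 1 := by
  cases isEmpty_or_nonempty V
  · simp
  have hedges : Nat.card (D.toSimpleGraph S).edgeSet ≤ S.card := by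
    rw [Nat.card_coe_set_eq, ← Set.ncard_coe_finset]
    refine (Set.ncard_le_ncard ?_ (Set.toFinite _)).trans
      (Set.ncard_image_le (f := fun g => s(D.src g, D.tgt g)) (Set.toFinite _))
    exact (SimpleGraph.edgeSet_fromEdgeSet _).trans_subset Set.sdiff_subset
  have := (SimpleGraph.Connected.mk h).card_vert_le_card_edgeSet_add_one
  rw [Nat.card_eq_fintype_card] at this
  omega

theorem Reachable.toSimpleGraph (h : D.Reachable T u v) : (D.toSimpleGraph T).Reachable u v :=
  h.induction .rfl fun _ hg _ hug => hug.trans (reachable_src_tgt hg)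

theorem IsArborescence.isSpanningTree [Fintype V] {A : Finset E} (h : D.IsArborescence A r) :
    D.IsSpanningTree A := by
  obtain ⟨hreach, hinj⟩ := isArborescence_iff.1 h
  refine ⟨conn_iff_preconnected.2 fun u v => ?_,
    (card_add_one_eq_iff_of_reachable hreach).2 hinj⟩
  exact (hreach u).toSimpleGraph.symm.trans (hreach v).toSimpleGraph

theorem IsSpanningTree.isArborescence [Fintype V] {T : Finset E} (hT : D.IsSpanningTree T)
    (hreach : ∀ v, D.Reachable T r v) : D.IsArborescence T r :=
  isArborescence_iff.2 ⟨hreach, (card_add_one_eq_iff_of_reachable hreach).1 hT.2⟩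

theorem exists_crossing_of_not_reachable (hT : D.Conn T) (hv : ¬ D.Reachable T r v) :
    ∃ e ∈ T, D.Reachable T r (D.tgt e) ∧ ¬ D.Reachable T r (D.src e) := by
  by_contra! hclosed
  refine hv (toSimpleGraph_reachable_of_closed (fun g hg => ⟨(·.step hg), hclosed g hg⟩)
    (conn_iff_preconnected.1 hT r v) .refl)

theorem IsDirCycle.exists_exit_of_entry {c : List E} (hc : D.IsDirCycle c) {P : V → Prop} {x : E}
    (hx : x ∈ c) (hin : P (D.tgt x)) (hout : ¬ P (D.src x)) :
    ∃ f ∈ c, P (D.src f) ∧ ¬ P (D.tgt f) := by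
  obtain ⟨hne, -, hnext⟩ := hc
  by_contra! hclosed
  have hL : 0 < c.length := List.length_pos_of_ne_nil hne
  obtain ⟨i, rfl⟩ := List.get_of_mem hx
  let y : ℕ → E := fun j => c.get ⟨(i + j) % c.length, Nat.mod_lt _ hL⟩
  have hy : ∀ j, D.tgt (y j) = D.src (y (j + 1)) := fun j => by
    simpa [y, Nat.add_mod_mod, add_assoc] using hnext ⟨(i + j) % c.length, Nat.mod_lt _ hL⟩
  have hall : ∀ j, P (D.tgt (y j)) := by
    intro j
    induction j with
    | zero => simpa [y, Nat.mod_eq_of_lt i.2] using hin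
    | succ j ih => exact hclosed _ (List.get_mem _ _) (hy j ▸ ih)
  have hlast := hall (c.length - 1)
  rw [hy, Nat.sub_add_cancel hL] at hlast
  exact hout (by simpa [y, Nat.mod_eq_of_lt i.2] using hlast)

theorem IsSpanningTree.exists_exchange [Fintype V] [DecidableEq E] {T : Finset E} {c : List E}
    (hT : D.IsSpanningTree T) (he : e ∈ T) (hin : D.Reachable T r (D.tgt e))
    (hout : ¬ D.Reachable T r (D.src e)) (hc : D.IsDirCycle c) (hec : e ∈ c) :
    ∃ f ∈ c, f ∉ T ∧ ¬ D.Reachable T r (D.tgt f) ∧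
      D.IsSpanningTree (insert f (T.erase e)) := by
  set H := D.toSimpleGraph ↑(T.erase e)
  have hpre : (H ⊔ SimpleGraph.edge (D.src e) (D.tgt e)).Preconnected := by
    rw [← toSimpleGraph_insert, ← Finset.coe_insert, Finset.insert_erase he]
    exact conn_iff_preconnected.1 hT.1
  have hreachH : ∀ v, D.Reachable T r v → H.Reachable r v := fun v h =>
    h.induction .rfl fun g hg hrg hrg' => by
      have hg' : g ∈ T.erase e := Finset.mem_erase.2 ⟨by rintro rfl; exact hout hrg, hg⟩
      exact hrg'.trans (reachable_src_tgt hg')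
  -- a spanning tree minus an edge is disconnected
  have hsplit : ¬ H.Reachable r (D.src e) := fun hse => by
    have hle := card_le_card_add_one_of_preconnected
      (hpre.of_sup_edge (hse.symm.trans (hreachH _ hin)))
    have := hT.2
    rw [Finset.card_erase_add_one he] at hle
    omega
  obtain ⟨f, hfc, hsf, htf⟩ :=
    hc.exists_exit_of_entry (P := H.Reachable r) hec (hreachH _ hin) hsplit
  have hfT : f ∉ T := fun hfT => by
    have hfe : f ≠ e := by rintro rfl; exact hsplit hsf
    exact htf (hsf.trans (reachable_src_tgt (Finset.mem_erase.2 ⟨hfe, hfT⟩)))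
  refine ⟨f, hfc, hfT, fun h => htf (hreachH _ h), ?_, ?_⟩
  · rw [conn_iff_preconnected, Finset.coe_insert, toSimpleGraph_insert]
    exact hpre.sup_edge_exchange ((hreachH _ hin).symm.trans hsf)
      fun h => htf ((hreachH _ hin).trans h)
  · rw [Finset.card_insert_of_notMem fun h => hfT (Finset.mem_of_mem_erase h),
      Finset.card_erase_add_one he]
    exact hT.2

open scoped Classical in
noncomputable def exchangeMeasure [Fintype V] (D : DigraphStr V E) (r : V) (T : Finset E) :
    ℕ ×ₗ ℕ :=
  toLex ((Finset.univ.filter fun v => ¬ D.Reachable T r v).card,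
    (T.filter fun g => D.Reachable T r (D.tgt g)).card)

theorem exchangeMeasure_insert_erase_lt [Fintype V] [DecidableEq E] {T : Finset E} (he : e ∈ T)
    (hin : D.Reachable T r (D.tgt e)) (hf : ¬ D.Reachable T r (D.tgt f))
    (hmono : ∀ v, D.Reachable T r v → D.Reachable (insert f (T.erase e) : Finset E) r v) :
    D.exchangeMeasure r (insert f (T.erase e)) < D.exchangeMeasure r T := by
  classical
  rw [exchangeMeasure, exchangeMeasure, Prod.Lex.toLex_lt_toLex]
  by_cases hsame : ∀ v, D.Reachable (insert f (T.erase e) : Finset E) r v → D.Reachable T r v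
  · have hiff : ∀ v, D.Reachable (insert f (T.erase e) : Finset E) r v ↔ D.Reachable T r v :=
      fun v => ⟨hsame v, hmono v⟩
    refine .inr ⟨by simp only [hiff], ?_⟩
    simp only [hiff]
    rw [Finset.filter_insert, if_neg hf, Finset.filter_erase]
    exact Finset.card_erase_lt_of_mem (Finset.mem_filter.2 ⟨he, hin⟩)
  · push Not at hsame
    obtain ⟨v, hv', hv⟩ := hsame
    refine .inl (Finset.card_lt_card ((Finset.ssubset_iff_of_subset fun x => ?_).2 ⟨v, ?_, ?_⟩))
    · simpa using mt (hmono x)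
    · simpa using hv
    · simpa using hv'

theorem exists_isArborescence_card_filter_eq [Fintype V] [DecidableEq E] {ι : Type}
    {C : ι → List E} (hC : ∀ i, D.IsDirCycle (C i)) (hpart : ∀ e, ∃! i, e ∈ C i) (r : V)
    {T : Finset E} (hT : D.IsSpanningTree T) :
    ∃ A : Finset E, D.IsArborescence A r ∧
      ∀ i, (A.filter (· ∈ C i)).card = (T.filter (· ∈ C i)).card := by
  by_cases hall : ∀ v, D.Reachable T r v
  · exact ⟨T, hT.isArborescence hall, fun _ => rfl⟩
  push Not at hall
  obtain ⟨v, hv⟩ := hall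
  obtain ⟨e, he, hin, hout⟩ := exists_crossing_of_not_reachable hT.1 hv
  obtain ⟨i, hei, hi⟩ := hpart e
  obtain ⟨f, hfi, hfT, hf, hT'⟩ := hT.exists_exchange he hin hout (hC i) hei
  have hmono : ∀ v, D.Reachable T r v → D.Reachable (insert f (T.erase e) : Finset E) r v :=
    fun v => Reachable.mono_of_forall fun g hg hrg => Finset.mem_coe.2 <|
      Finset.mem_insert_of_mem (Finset.mem_erase.2 ⟨by rintro rfl; exact hout hrg, hg⟩)
  obtain ⟨A, hA, hcount⟩ := exists_isArborescence_card_filter_eq hC hpart r hT'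
  refine ⟨A, hA, fun j => (hcount j).trans (Finset.card_filter_insert_erase he hfT ?_)⟩
  exact ⟨fun h => hi j h ▸ hfi, fun h => (hpart f).unique h hfi ▸ hei⟩
termination_by D.exchangeMeasure r T
decreasing_by exact exchangeMeasure_insert_erase_lt he hin hf hmono

end DigraphStr

open MvPolynomial in
theorem AltDimap.mem_support_Mpoly_iff {V E : Type} [Fintype V] [Fintype E] [DecidableEq E]
    {k : ℕ} (D : AltDimap V E k) (r : V) (α : Fin k →₀ ℕ) :
    α ∈ (Mpoly D r).support ↔
      ∃ A : Finset E, D.IsArborescence A r ∧ ∀ i, α i = (A.filter (· ∈ D.cw i)).card := by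
  have hmonomial : ∀ A : Finset E,
      ∏ i, (X i : MvPolynomial (Fin k) ℝ) ^ (A.filter (· ∈ D.cw i)).card =
        monomial (Finsupp.equivFunOnFinite.symm fun i => (A.filter (· ∈ D.cw i)).card) 1 :=
    fun A => by rw [monomial_eq, C_1, one_mul, Finsupp.prod_fintype _ _ fun i => pow_zero _]; rfl
  rw [Mpoly, Finset.sum_congr rfl fun A _ => hmonomial A, mem_support_sum_monomial_one]
  simp [Finsupp.ext_iff, eq_comm]

/-- The support of the M-polynomial is independent of the root, and equals the
set of tuples of cycle-statistics of spanning trees of the underlying graph. -/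
theorem stmt7 {V E : Type} [Fintype V] [Fintype E] [DecidableEq E] {k : ℕ}
    (D : AltDimap V E k) (r r' : V) :
    (Mpoly D r).support = (Mpoly D r').support ∧
    ∀ α : Fin k →₀ ℕ, α ∈ (Mpoly D r).support ↔
      ∃ T : Finset E, D.toDigraphStr.IsSpanningTree T ∧
        ∀ i : Fin k, α i = (T.filter (fun e => e ∈ D.cw i)).card := by
  have key : ∀ r α, α ∈ (Mpoly D r).support ↔
      ∃ T : Finset E, D.IsSpanningTree T ∧ ∀ i, α i = (T.filter (· ∈ D.cw i)).card := by
    intro r α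
    rw [D.mem_support_Mpoly_iff]
    constructor
    · rintro ⟨A, hA, hα⟩
      exact ⟨A, hA.isSpanningTree, hα⟩
    · rintro ⟨T, hT, hα⟩
      obtain ⟨A, hA, hcount⟩ :=
        DigraphStr.exists_isArborescence_card_filter_eq D.cw_cycle D.cw_partition r hT
      exact ⟨A, hA, fun i => (hα i).trans (hcount i).symm⟩
  exact ⟨Finset.ext fun α => (key r α).trans (key r' α).symm, key r⟩
end

section
/- Let f = Σ_{m=0}^d c_m t^m q^{d−m} be a homogeneous bivariate polynomial with nonnegative coefficients whose normalization N(f) = Σ_m c_m t^m q^{d−m} / (m!(d−m)!) is Lorentzian. Then the univariate polynomial f(t,1) = Σ_m c_m t^m has log-concave coefficient sequence with no internal zeros, and in particular the sequence (c_m) is unimodal. -/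
open MvPolynomial

/-- M-convexity of a set of exponent vectors. -/
def MConvex {σ : Type*} (J : Set (σ →₀ ℕ)) : Prop :=
  ∀ α ∈ J, ∀ β ∈ J, ∀ i : σ, β i < α i →
    ∃ j : σ, α j < β j ∧ (α - Finsupp.single i 1 + Finsupp.single j 1) ∈ J ∧
      (β - Finsupp.single j 1 + Finsupp.single i 1) ∈ J

/-- Hessian matrix of a polynomial (entries are constant terms of second derivatives). -/
noncomputable def hessMv {n : ℕ} (f : MvPolynomial (Fin n) ℝ) : Matrix (Fin n) (Fin n) ℝ :=
  fun i j => (MvPolynomial.pderiv i (MvPolynomial.pderiv j f)).coeff 0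

/-- A real symmetric matrix has at most one positive eigenvalue. -/
def AtMostOnePosEig {n : ℕ} (H : Matrix (Fin n) (Fin n) ℝ) : Prop :=
  ∃ hH : H.IsHermitian, (Finset.univ.filter fun i => 0 < hH.eigenvalues i).card ≤ 1

/-- Lorentzian polynomials of degree `d` in `n` variables (Brändén–Huh). -/
def Lorentzian {n : ℕ} : ℕ → MvPolynomial (Fin n) ℝ → Prop
  | 0, f => f.IsHomogeneous 0 ∧ ∀ m, 0 ≤ f.coeff m
  | 1, f => f.IsHomogeneous 1 ∧ ∀ m, 0 ≤ f.coeff m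
  | 2, f => f.IsHomogeneous 2 ∧ (∀ m, 0 ≤ f.coeff m) ∧ MConvex ((f.support : Finset (Fin n →₀ ℕ)) : Set (Fin n →₀ ℕ)) ∧
      AtMostOnePosEig (hessMv f)
  | (d+3), f => f.IsHomogeneous (d+3) ∧ (∀ m, 0 ≤ f.coeff m) ∧ MConvex ((f.support : Finset (Fin n →₀ ℕ)) : Set (Fin n →₀ ℕ)) ∧
      ∀ i, Lorentzian (d+2) (MvPolynomial.pderiv i f)

/-- The normalization operator `N(x^α) = x^α/α!`. -/
noncomputable def normalizeMv {n : ℕ} (f : MvPolynomial (Fin n) ℝ) : MvPolynomial (Fin n) ℝ :=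
  ∑ α ∈ f.support, MvPolynomial.monomial α (f.coeff α / (α.prod fun _ m => (Nat.factorial m : ℝ)))

/-!
Differentiating `N(f)` `r` times in the first variable and `d - 2 - r` times in the second
leaves a quadratic form whose Hessian is `!![c (r+2), c (r+1); c (r+1), c r]`: the
normalization `N` exactly cancels the factorials produced by differentiation. This quadratic
form is Lorentzian, so its Hessian has at most one positive eigenvalue; as its trace is
nonnegative, its determinant `c r * c (r+2) - c (r+1) ^ 2` is `≤ 0`. The support of `N(f)` lies
on the line `α₀ + α₁ = d`, and M-convexity of that support means it is an interval, i.e. `c` has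
no internal zeros. Unimodality around a maximizer of `c` then follows from these two properties.
-/

open Nat

namespace MvPolynomial

variable {σ R : Type*} [CommSemiring R]

/-- The value of `∂^α f` at `0`. -/
noncomputable def factorialCoeff (f : MvPolynomial σ R) (α : σ →₀ ℕ) : R :=
  (α.prod fun _ m => (m ! : R)) * f.coeff α

theorem factorialCoeff_zero (f : MvPolynomial σ R) : factorialCoeff f 0 = f.coeff 0 := by
  simp [factorialCoeff]

theorem factorialCoeff_pderiv (i : σ) (f : MvPolynomial σ R) (α : σ →₀ ℕ) :
    factorialCoeff (pderiv i f) α = factorialCoeff f (α + Finsupp.single i 1) := by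
  classical
  have hprod : ∀ β : σ →₀ ℕ, (β.prod fun _ m => (m ! : R)) =
      ((β i)! : R) * (β.erase i).prod fun _ m => (m ! : R) := fun β =>
    (Finsupp.mul_prod_erase' β i _ fun _ => by simp).symm
  rw [factorialCoeff, factorialCoeff, coeff_pderiv, hprod, hprod (α + _),
    Finsupp.erase_add, Finsupp.erase_single, add_zero]
  simp only [Finsupp.coe_add, Pi.add_apply, Finsupp.single_eq_same, factorial_succ]
  push_cast
  ring

theorem factorialCoeff_iterate_pderiv (i : σ) (k : ℕ) (f : MvPolynomial σ R) (α : σ →₀ ℕ) :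
    factorialCoeff ((pderiv i)^[k] f) α = factorialCoeff f (α + Finsupp.single i k) := by
  induction k generalizing α with
  | zero => simp
  | succ k ih =>
    rw [Function.iterate_succ_apply', factorialCoeff_pderiv, ih, add_assoc,
      ← Finsupp.single_add, add_comm 1 k]

end MvPolynomial

theorem coeff_normalizeMv {n : ℕ} (f : MvPolynomial (Fin n) ℝ) (α : Fin n →₀ ℕ) :
    (normalizeMv f).coeff α = f.coeff α / (α.prod fun _ m => (m ! : ℝ)) := by
  classical
  rw [normalizeMv, coeff_sum]
  simp only [coeff_monomial, Finset.sum_ite_eq', mem_support_iff, ne_eq, ite_not]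
  split_ifs with h <;> simp [h]

theorem factorialCoeff_normalizeMv {n : ℕ} (f : MvPolynomial (Fin n) ℝ) (α : Fin n →₀ ℕ) :
    factorialCoeff (normalizeMv f) α = f.coeff α := by
  have : (α.prod fun _ m => (m ! : ℝ)) ≠ 0 :=
    Finset.prod_ne_zero_iff.mpr fun _ _ => by positivity
  rw [factorialCoeff, coeff_normalizeMv, mul_div_cancel₀ _ this]

theorem support_normalizeMv {n : ℕ} (f : MvPolynomial (Fin n) ℝ) :
    (normalizeMv f).support = f.support := by
  ext α
  simp only [mem_support_iff, coeff_normalizeMv, ne_eq, div_eq_zero_iff, not_or]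
  exact and_iff_left (Finset.prod_ne_zero_iff.mpr fun _ _ => by positivity)

theorem hessMv_eq_factorialCoeff {n : ℕ} (f : MvPolynomial (Fin n) ℝ) (i j : Fin n) :
    hessMv f i j = factorialCoeff f (Finsupp.single i 1 + Finsupp.single j 1) := by
  rw [hessMv, ← factorialCoeff_zero, factorialCoeff_pderiv, factorialCoeff_pderiv, zero_add]

theorem Matrix.det_nonpos_of_atMostOnePosEig {H : Matrix (Fin 2) (Fin 2) ℝ}
    (hH : AtMostOnePosEig H) (htr : 0 ≤ H.trace) : H.det ≤ 0 := by
  obtain ⟨hH, hcard⟩ := hH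
  by_contra! hdet
  rw [hH.det_eq_prod_eigenvalues, Fin.prod_univ_two] at hdet
  rw [hH.trace_eq_sum_eigenvalues, Fin.sum_univ_two] at htr
  simp only [RCLike.ofReal_real_eq_id, id] at hdet htr
  have hpos : ∀ i, 0 < hH.eigenvalues i := by
    rw [Fin.forall_fin_two]
    constructor <;> nlinarith [mul_self_nonneg (hH.eigenvalues 0 - hH.eigenvalues 1)]
  simp [hpos] at hcard

theorem Lorentzian.iterate_pderiv {n : ℕ} (i : Fin n) (k m : ℕ) {f : MvPolynomial (Fin n) ℝ}
    (h : Lorentzian (m + 2 + k) f) : Lorentzian (m + 2) ((pderiv i)^[k] f) := by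
  induction k generalizing m with
  | zero => exact h
  | succ k ih =>
    rw [Function.iterate_succ_apply']
    exact (ih (m + 1) (by rwa [show m + 1 + 2 + k = m + 2 + (k + 1) by omega])).2.2.2 i

theorem Lorentzian.mConvex_support {n k : ℕ} {f : MvPolynomial (Fin n) ℝ}
    (h : Lorentzian (k + 2) f) : MConvex (f.support : Set (Fin n →₀ ℕ)) := by
  cases k <;> exact h.2.2.1

section Unimodal

variable {d : ℕ} {c : ℕ → ℝ}

theorem ne_zero_of_forall_pred_ne_zero
    (hstep : ∀ a b : ℕ, a < b → b ≤ d → c a ≠ 0 → c b ≠ 0 → c (b - 1) ≠ 0) :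
    ∀ m₁ m₂ m₃ : ℕ, m₁ ≤ m₂ → m₂ ≤ m₃ → m₃ ≤ d → c m₁ ≠ 0 → c m₃ ≠ 0 → c m₂ ≠ 0 := by
  intro m₁ m₂ m₃ h₁₂ h₂₃
  induction m₃, h₂₃ using Nat.le_induction with
  | base => exact fun _ _ h => h
  | succ n _ ih =>
    intro hnd h₁ hn
    exact ih (by omega) h₁ (hstep m₁ (n + 1) (by omega) hnd h₁ hn)

theorem le_succ_of_lt_of_forall_le (hc : ∀ m, 0 ≤ c m)
    (hlc : ∀ m : ℕ, 0 < m → m < d → c (m - 1) * c (m + 1) ≤ c m ^ 2)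
    (hz : ∀ m₁ m₂ m₃ : ℕ, m₁ ≤ m₂ → m₂ ≤ m₃ → m₃ ≤ d → c m₁ ≠ 0 → c m₃ ≠ 0 → c m₂ ≠ 0)
    {M : ℕ} (hMd : M ≤ d) (hmax : ∀ a ≤ d, c a ≤ c M) {k : ℕ} (hkM : k < M) :
    c k ≤ c (k + 1) := by
  by_contra! hdesc
  have hk : 0 < c k := (hc _).trans_lt hdesc
  have hpos : ∀ j, k ≤ j → j ≤ M → 0 < c j := fun j hkj hjM =>
    (hc j).lt_of_ne' (hz k j M hkj hjM hMd hk.ne' (hk.trans_le (hmax k (by omega))).ne')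
  -- log-concavity propagates a strict descent to the right
  have hdesc' : ∀ j, k ≤ j → j < M → c (j + 1) < c j := by
    intro j hkj
    induction j, hkj using Nat.le_induction with
    | base => exact fun _ => hdesc
    | succ j hkj ih =>
      intro hjM
      have hlc' := hlc (j + 1) (by omega) (by omega)
      rw [Nat.add_sub_cancel] at hlc'
      nlinarith [ih (by omega), hpos j hkj (by omega), hpos (j + 1) (by omega) (by omega)]
  have hlast := hdesc' (M - 1) (by omega) (by omega)
  rw [Nat.sub_add_cancel (by omega)] at hlast
  linarith [hmax (M - 1) (by omega)]

theorem succ_le_of_le_of_forall_le (hc : ∀ m, 0 ≤ c m)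
    (hlc : ∀ m : ℕ, 0 < m → m < d → c (m - 1) * c (m + 1) ≤ c m ^ 2)
    (hz : ∀ m₁ m₂ m₃ : ℕ, m₁ ≤ m₂ → m₂ ≤ m₃ → m₃ ≤ d → c m₁ ≠ 0 → c m₃ ≠ 0 → c m₂ ≠ 0)
    {M : ℕ} (hmax : ∀ a ≤ d, c a ≤ c M) {k : ℕ} (hMk : M ≤ k) (hkd : k < d) :
    c (k + 1) ≤ c k := by
  by_contra! hasc
  have hk : 0 < c (k + 1) := (hc _).trans_lt hasc
  have hpos : ∀ j, M ≤ j → j ≤ k + 1 → 0 < c j := fun j hMj hjk =>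
    (hc j).lt_of_ne' (hz M j (k + 1) hMj hjk hkd (hk.trans_le (hmax _ hkd)).ne' hk.ne')
  -- log-concavity propagates a strict ascent to the left
  have hasc' : c M < c (M + 1) := by
    refine Nat.decreasingInduction' (P := fun j => c j < c (j + 1))
      (fun j hjk hMj ih => ?_) hMk hasc
    have hlc' := hlc (j + 1) (by omega) (by omega)
    rw [Nat.add_sub_cancel] at hlc'
    nlinarith [hpos j hMj (by omega), hpos (j + 1) (by omega) (by omega)]
  linarith [hmax (M + 1) (by omega)]

theorem exists_unimodal_of_logConcave (hc : ∀ m, 0 ≤ c m)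
    (hlc : ∀ m : ℕ, 0 < m → m < d → c (m - 1) * c (m + 1) ≤ c m ^ 2)
    (hz : ∀ m₁ m₂ m₃ : ℕ, m₁ ≤ m₂ → m₂ ≤ m₃ → m₃ ≤ d → c m₁ ≠ 0 → c m₃ ≠ 0 → c m₂ ≠ 0) :
    ∃ M : ℕ, M ≤ d ∧ (∀ a b : ℕ, a ≤ b → b ≤ M → c a ≤ c b) ∧
      (∀ a b : ℕ, M ≤ a → a ≤ b → b ≤ d → c b ≤ c a) := by
  obtain ⟨M, hMd, hmax⟩ := Finset.exists_max_image (Finset.range (d + 1)) c ⟨0, by simp⟩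
  simp only [Finset.mem_range, Nat.lt_succ_iff] at hMd hmax
  have hmono : MonotoneOn c (Set.Iic M) := monotoneOn_of_le_add_one Set.ordConnected_Iic
    fun k _ _ hk => le_succ_of_lt_of_forall_le hc hlc hz hMd hmax (by simpa using hk)
  have hanti : AntitoneOn c (Set.Icc M d) := antitoneOn_of_add_one_le Set.ordConnected_Icc
    fun k _ hk hk1 => succ_le_of_le_of_forall_le hc hlc hz hmax hk.1 (by simpa using hk1.2)
  refine ⟨M, hMd, fun a b hab hbM => hmono (Set.mem_Iic.mpr (by omega)) hbM hab,
    fun a b hMa hab hbd => hanti ⟨hMa, by omega⟩ ⟨by omega, hbd⟩ hab⟩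

end Unimodal

noncomputable def binaryForm (d : ℕ) (c : ℕ → ℝ) : MvPolynomial (Fin 2) ℝ :=
  ∑ m ∈ Finset.range (d + 1),
    monomial (Finsupp.single (0 : Fin 2) m + Finsupp.single (1 : Fin 2) (d - m)) (c m)

section BinaryForm

variable {d : ℕ} {c : ℕ → ℝ}

theorem coeff_binaryForm (α : Fin 2 →₀ ℕ) :
    (binaryForm d c).coeff α = if α 0 + α 1 = d then c (α 0) else 0 := by
  have hexp : ∀ m, Finsupp.single 0 m + Finsupp.single 1 (d - m) = α ↔ m = α 0 ∧ d - m = α 1 := by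
    intro m
    simp [DFunLike.ext_iff, Fin.forall_fin_two, eq_comm]
  simp only [binaryForm, coeff_sum, coeff_monomial, hexp]
  split_ifs with h
  · rw [Finset.sum_eq_single_of_mem (α 0) (Finset.mem_range.mpr (by omega))
      fun m _ hm => if_neg fun h' => hm h'.1]
    exact if_pos ⟨rfl, by omega⟩
  · exact Finset.sum_eq_zero fun m hm => if_neg (by rw [Finset.mem_range] at hm; omega)

theorem hessMv_iterate_pderiv_normalizeMv_binaryForm (r s : ℕ) :
    hessMv ((pderiv 1)^[s] ((pderiv 0)^[r] (normalizeMv (binaryForm (r + s + 2) c)))) =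
      !![c (r + 2), c (r + 1); c (r + 1), c r] := by
  ext i j
  rw [hessMv_eq_factorialCoeff, factorialCoeff_iterate_pderiv, factorialCoeff_iterate_pderiv,
    factorialCoeff_normalizeMv, coeff_binaryForm]
  fin_cases i <;> fin_cases j <;> simp [add_comm, add_left_comm, add_assoc]

theorem logConcave_of_lorentzian_normalizeMv_binaryForm (hc : ∀ m, 0 ≤ c m)
    (hL : Lorentzian d (normalizeMv (binaryForm d c))) :
    ∀ m : ℕ, 0 < m → m < d → c (m - 1) * c (m + 1) ≤ c m ^ 2 := by
  intro m hm hmd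
  obtain ⟨r, rfl⟩ : ∃ r, m = r + 1 := ⟨m - 1, by omega⟩
  obtain ⟨s, rfl⟩ : ∃ s, d = r + s + 2 := ⟨d - r - 2, by omega⟩
  have hL₁ : Lorentzian (s + 2) ((pderiv 0)^[r] (normalizeMv (binaryForm (r + s + 2) c))) :=
    Lorentzian.iterate_pderiv 0 r s (by rwa [show s + 2 + r = r + s + 2 by omega])
  have hL₂ : Lorentzian 2
      ((pderiv 1)^[s] ((pderiv 0)^[r] (normalizeMv (binaryForm (r + s + 2) c)))) :=
    Lorentzian.iterate_pderiv 1 s 0 (by rwa [zero_add, add_comm])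
  have hdet := Matrix.det_nonpos_of_atMostOnePosEig hL₂.2.2.2 (by
    rw [hessMv_iterate_pderiv_normalizeMv_binaryForm, Matrix.trace_fin_two_of]
    linarith [hc (r + 2), hc r])
  rw [hessMv_iterate_pderiv_normalizeMv_binaryForm, Matrix.det_fin_two_of] at hdet
  rw [Nat.add_sub_cancel]
  nlinarith

theorem pred_ne_zero_of_mConvex_support_binaryForm
    (hM : MConvex ((binaryForm d c).support : Set (Fin 2 →₀ ℕ))) {a b : ℕ} (hab : a < b)
    (hbd : b ≤ d) (ha : c a ≠ 0) (hb : c b ≠ 0) : c (b - 1) ≠ 0 := by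
  have hmem : ∀ m ≤ d, c m ≠ 0 → Finsupp.single (0 : Fin 2) m + Finsupp.single 1 (d - m) ∈
      ((binaryForm d c).support : Set (Fin 2 →₀ ℕ)) := by
    intro m hmd hm
    simpa [coeff_binaryForm, Nat.add_sub_cancel' hmd] using hm
  obtain ⟨j, hj, hexch, -⟩ := hM _ (hmem b hbd hb) _ (hmem a (by omega) ha) 0 (by simpa using hab)
  fin_cases j
  · exact (lt_asymm hab (by simpa using hj)).elim
  · rw [Finset.mem_coe, mem_support_iff, coeff_binaryForm] at hexch
    simpa using (ite_ne_right_iff.mp hexch).2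

theorem ne_zero_of_lorentzian_normalizeMv_binaryForm
    (hL : Lorentzian d (normalizeMv (binaryForm d c))) :
    ∀ m₁ m₂ m₃ : ℕ, m₁ ≤ m₂ → m₂ ≤ m₃ → m₃ ≤ d → c m₁ ≠ 0 → c m₃ ≠ 0 → c m₂ ≠ 0 := by
  refine ne_zero_of_forall_pred_ne_zero fun a b hab hbd ha hb => ?_
  rcases lt_or_ge d 2 with hd | hd
  · rwa [show b - 1 = a by omega]
  · obtain ⟨k, rfl⟩ := Nat.exists_eq_add_of_le' hd
    refine pred_ne_zero_of_mConvex_support_binaryForm ?_ hab hbd ha hb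
    rw [← support_normalizeMv]
    exact hL.mConvex_support

end BinaryForm

/-- A bivariate homogeneous polynomial `Σ c_m t^m q^(d-m)` with nonnegative
coefficients whose normalization is Lorentzian has log-concave coefficient
sequence with no internal zeros; in particular `(c_m)` is unimodal. -/
theorem stmt16 {d : ℕ} (c : ℕ → ℝ) (hc : ∀ m, 0 ≤ c m)
    (hL : Lorentzian d (normalizeMv (∑ m ∈ Finset.range (d + 1),
      MvPolynomial.monomial
        (Finsupp.single (0 : Fin 2) m + Finsupp.single (1 : Fin 2) (d - m)) (c m)))) :
    (∀ m : ℕ, 0 < m → m < d → c (m - 1) * c (m + 1) ≤ c m ^ 2) ∧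
    (∀ m₁ m₂ m₃ : ℕ, m₁ ≤ m₂ → m₂ ≤ m₃ → m₃ ≤ d → c m₁ ≠ 0 → c m₃ ≠ 0 → c m₂ ≠ 0) ∧
    ∃ M : ℕ, M ≤ d ∧ (∀ a b : ℕ, a ≤ b → b ≤ M → c a ≤ c b) ∧
      (∀ a b : ℕ, M ≤ a → a ≤ b → b ≤ d → c b ≤ c a) := by
  change Lorentzian d (normalizeMv (binaryForm d c)) at hL
  have hlc := logConcave_of_lorentzian_normalizeMv_binaryForm hc hL
  have hz := ne_zero_of_lorentzian_normalizeMv_binaryForm hL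
  exact ⟨hlc, hz, exists_unimodal_of_logConcave hc hlc hz⟩
end
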